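/- arXiv:1505.07025 — 4 statements merged into one kernel-verified Lean document; each statement's English description precedes it below -/
import Mathlib

section
/- If C is a nonzero subcategory of mod A closed under cokernels of monomorphisms, then C̄ ⊆ C̲. -/
open CategoryTheory

variable {A : Type} [Ring A]

/-- `C̲`: the nonzero modules of `C` none of whose proper nonzero submodules lies in `C`. -/
def subMin (C : Set (ModuleCat A)) : Set (ModuleCat A) :=
  {M | M ∈ C ∧ Nontrivial M ∧
    ∀ L : Submodule A M, L ≠ ⊥ → L ≠ ⊤ → ModuleCat.of A L ∉ C}

/-- `C̄`: the nonzero modules of `C` none of whose proper nonzero quotients lies in `C`. -/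
def quotMin (C : Set (ModuleCat A)) : Set (ModuleCat A) :=
  {M | M ∈ C ∧ Nontrivial M ∧
    ∀ L : Submodule A M, L ≠ ⊥ → L ≠ ⊤ → ModuleCat.of A (M ⧸ L) ∉ C}

/-- If `C` is a nonzero subcategory of `mod A` closed under cokernels of monomorphisms,
then `C̄ ⊆ C̲`. -/
theorem stmt_6 (C : Set (ModuleCat A))
    (hC : ∃ N ∈ C, Nontrivial N)
    (hcoker : ∀ (M N : ModuleCat A), M ∈ C → N ∈ C → ∀ f : M →ₗ[A] N,
      Function.Injective f → ModuleCat.of A (N ⧸ LinearMap.range f) ∈ C) :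
    quotMin C ⊆ subMin C := by
  rintro M ⟨hM, hnt, hq⟩
  refine ⟨hM, hnt, fun L hbot htop hLC => ?_⟩
  have h := hcoker (ModuleCat.of A L) M hLC hM L.subtype Subtype.val_injective
  rw [Submodule.range_subtype] at h
  exact hq L hbot htop h
end

section
/- Let C be a nonzero subcategory of mod A closed under extensions and cokernels of monomorphisms. Then C̲ is the smallest class of modules X with F(X) = C. -/
open CategoryTheory

variable {A : Type} [Ring A]

/-- `M` is `X`-filtered: there is a chain `0 = M₀ ⊂ M₁ ⊂ ⋯ ⊂ Mₙ = M` of submodules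
with all successive quotients in `X`. -/
def Filtered (X : Set (ModuleCat A)) (M : ModuleCat A) : Prop :=
  ∃ (n : ℕ) (s : Fin (n+1) → Submodule A M),
    s 0 = ⊥ ∧ s (Fin.last n) = ⊤ ∧ StrictMono s ∧
    ∀ i : Fin n, ModuleCat.of A
      (↥(s i.succ) ⧸ (s i.castSucc).comap (s i.succ).subtype) ∈ X

/-- `M` is `X`-cofiltered: there is a sequence of proper surjections
`M = Mₙ → Mₙ₋₁ → ⋯ → M₀ = 0` with all kernels in `X`. -/
def Cofiltered (X : Set (ModuleCat A)) (M : ModuleCat A) : Prop :=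
  ∃ (n : ℕ) (N : Fin (n+1) → ModuleCat A)
    (f : ∀ i : Fin n, N i.succ →ₗ[A] N i.castSucc),
    N (Fin.last n) = M ∧ Subsingleton (N 0) ∧
    ∀ i : Fin n, Function.Surjective (f i) ∧ ¬ Function.Injective (f i) ∧
      ModuleCat.of A (LinearMap.ker (f i)) ∈ X


section HL
variable {A : Type} [Ring A]

local notation "J" => Ideal.jacobson (⊥ : Ideal A)

lemma jac_mul_mem {x : A} (hx : x ∈ J) (y : A) : x * y ∈ J :=
  (Ideal.jacobson (⊥ : Ideal A)).mul_mem_right y hx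

/-- iterated power of the Jacobson radical, as an ideal -/
def jpow (B : Type) [Ring B] : ℕ → Ideal B
  | 0 => ⊤
  | (k+1) => Ideal.jacobson (⊥ : Ideal B) • jpow B k

lemma jpow_zero : jpow A 0 = ⊤ := rfl

lemma jpow_succ (k : ℕ) : jpow A (k+1) = J • jpow A k := rfl

lemma ideal_smul_assoc (I K : Ideal A) {M : Type*} [AddCommGroup M] [Module A M]
    (N : Submodule A M) : (I • K) • N = I • (K • N) := by
  apply le_antisymm
  · apply Submodule.smul_le.2
    intro r hr n hn
    refine Submodule.smul_induction_on hr (fun j hj q hq => ?_) (fun u v hu hv => ?_)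
    · rw [show (j • q) • n = j • (q • n) by rw [smul_eq_mul, mul_smul]]
      exact Submodule.smul_mem_smul hj (Submodule.smul_mem_smul hq hn)
    · rw [add_smul]; exact Submodule.add_mem _ hu hv
  · apply Submodule.smul_le.2
    intro j hj m hm
    refine Submodule.smul_induction_on hm (fun q hq n hn => ?_) (fun u v hu hv => ?_)
    · rw [← mul_smul]
      exact Submodule.smul_mem_smul (Submodule.smul_mem_smul hj hq) hn
    · rw [smul_add]; exact Submodule.add_mem _ hu hv

lemma jpow_smul_smul (a b : ℕ) {M : Type*} [AddCommGroup M] [Module A M]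
    (N : Submodule A M) : jpow A a • (jpow A b • N) = jpow A (a + b) • N := by
  induction a with
  | zero => rw [jpow_zero, Submodule.top_smul, Nat.zero_add]
  | succ k ih =>
    rw [jpow_succ, show k + 1 + b = (k+b) + 1 by omega, jpow_succ,
      ideal_smul_assoc, ih, ideal_smul_assoc]

lemma jpow_le_jac {k : ℕ} : jpow A (k+1) ≤ (J : Ideal A) := by
  rw [jpow_succ]
  apply Submodule.smul_le.2
  intro j hj a _
  exact jac_mul_mem hj a

lemma jpow_nilpotent [IsArtinianRing A] : ∃ n, (jpow A (n+1) : Ideal A) = ⊥ := by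
  have anti : ∀ a b : ℕ, a ≤ b → jpow A b ≤ jpow A a := by
    have mono : ∀ k, (jpow A (k+1) : Ideal A) ≤ jpow A k := by
      intro k
      induction k with
      | zero => exact le_top
      | succ k ih => rw [jpow_succ, jpow_succ k]; exact Submodule.smul_mono le_rfl ih
    intro a b hab
    induction hab with
    | refl => exact le_rfl
    | step h ih => exact le_trans (mono _) ih
  obtain ⟨I, ⟨n, rfl⟩, hmin⟩ := (wellFounded_lt (α := Ideal A)).has_min
    (Set.range (jpow A)) ⟨⊤, 0, rfl⟩
  have hn : ∀ m, n ≤ m → (jpow A n : Ideal A) = jpow A m := by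
    intro m hm
    exact ((anti n m hm).eq_of_not_lt (hmin _ ⟨m, rfl⟩)).symm
  set Q : Ideal A := jpow A (n+1) with hQ
  have hQQ : ∀ N : Submodule A A, Q • (Q • N) = Q • N := by
    intro N
    rw [hQ, jpow_smul_smul]
    have : (jpow A (n+1+(n+1)) : Ideal A) = jpow A (n+1) := by
      rw [← hn (n+1) (Nat.le_succ n), ← hn (n+1+(n+1)) (by omega)]
    rw [this]
  refine ⟨n, by_contra fun hne => ?_⟩
  have hQtop : Q • (⊤ : Ideal A) ≠ ⊥ := by
    intro h
    apply hne
    apply eq_bot_iff.2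
    intro q hq
    have : q • (1 : A) ∈ Q • (⊤ : Ideal A) := Submodule.smul_mem_smul hq trivial
    rw [h] at this
    simpa using this
  obtain ⟨N, hN, hNmin⟩ := (wellFounded_lt (α := Ideal A)).has_min
    {N : Ideal A | Q • N ≠ ⊥} ⟨⊤, hQtop⟩
  obtain ⟨x, hxN, hx⟩ : ∃ x ∈ N, Q • (Submodule.span A {x}) ≠ ⊥ := by
    by_contra h
    push_neg at h
    apply hN
    apply eq_bot_iff.2
    apply Submodule.smul_le.2
    intro q hq m hm
    have : q • m ∈ Q • Submodule.span A {m} :=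
      Submodule.smul_mem_smul hq (Submodule.mem_span_singleton_self m)
    rw [h m hm] at this
    simpa using this
  have hspan : Submodule.span A {x} = N := by
    by_contra hne'
    exact hNmin _ hx (lt_of_le_of_ne ((Submodule.span_le).2 (by simpa using hxN)) hne')
  have hQN : Q • N = N := by
    have h1 : Q • N ≤ N := Submodule.smul_le_right
    rcases lt_or_eq_of_le h1 with h | h
    · exact absurd h (hNmin (Q • N) (by show Q • (Q • N) ≠ ⊥; rw [hQQ]; exact hN))
    · exact h
  have hJN : N ≤ J • N := by
    conv_lhs => rw [← hQN]
    apply Submodule.smul_le.2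
    intro q hq m hm
    exact Submodule.smul_mem_smul (jpow_le_jac hq) hm
  have hxJ : x ∈ Submodule.map (LinearMap.toSpanSingleton A A x) J := by
    have hx' : x ∈ J • N := hJN (hspan ▸ Submodule.mem_span_singleton_self x)
    have hle : J • N ≤ Submodule.map (LinearMap.toSpanSingleton A A x) J := by
      apply Submodule.smul_le.2
      intro j hj m hm
      rw [← hspan] at hm
      obtain ⟨a, rfl⟩ := Submodule.mem_span_singleton.1 hm
      refine ⟨j * a, jac_mul_mem hj a, ?_⟩
      show (j * a) • x = j • a • x
      rw [mul_smul]
    exact hle hx'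
  obtain ⟨b, hb, hbx⟩ := hxJ
  have hbx' : (1 - b) * x = 0 := by
    have hbxx : b • x = x := hbx
    show (1 - b) • x = 0
    rw [sub_smul, one_smul, hbxx, sub_self]
  obtain ⟨s, hs⟩ := Ideal.exists_mul_sub_mem_of_sub_one_mem_jacobson (1 - b)
    (by simpa using (J : Ideal A).neg_mem hb)
  have hs1 : s * (1 - b) = 1 := by
    rw [Ideal.mem_bot, sub_eq_zero] at hs
    exact hs
  have hx0 : x = 0 := by
    calc x = (s * (1 - b)) * x := by rw [hs1, one_mul]
    _ = s * ((1 - b) * x) := by rw [mul_assoc]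
    _ = 0 := by rw [hbx', mul_zero]
  apply hx
  rw [hx0, Submodule.span_zero_singleton, Submodule.smul_bot]

end HL

section HL2
variable {A : Type} [Ring A]

local notation "J" => Ideal.jacobson (⊥ : Ideal A)

lemma jac_eq_finite_inf [IsArtinianRing A] :
    ∃ s : Finset (Ideal A), (∀ m ∈ s, m.IsMaximal) ∧ (J : Ideal A) = s.inf id := by
  classical
  obtain ⟨I, ⟨s, hs, rfl⟩, hmin⟩ := (wellFounded_lt (α := Ideal A)).has_min
    {I : Ideal A | ∃ s : Finset (Ideal A), (∀ m ∈ s, m.IsMaximal) ∧ I = s.inf id}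
    ⟨⊤, ∅, by simp, by simp⟩
  refine ⟨s, hs, ?_⟩
  have hle : ∀ m : Ideal A, m.IsMaximal → s.inf id ≤ m := by
    intro m hm
    have hmem : s.inf id ⊓ m ∈ {I : Ideal A | ∃ s : Finset (Ideal A),
        (∀ m ∈ s, m.IsMaximal) ∧ I = s.inf id} := by
      refine ⟨insert m s, ?_, by rw [Finset.inf_insert, id, inf_comm]⟩
      intro k hk
      rcases Finset.mem_insert.1 hk with rfl | hk
      · exact hm
      · exact hs k hk
    have := hmin _ hmem
    have heq : s.inf id ⊓ m = s.inf id := by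
      rcases lt_or_eq_of_le (inf_le_left (a := s.inf id) (b := m)) with h | h
      · exact absurd h this
      · exact h
    exact inf_eq_left.1 heq
  apply le_antisymm
  · apply Finset.le_inf
    intro m hm
    exact sInf_le ⟨bot_le, hs m hm⟩
  · exact le_sInf fun m hm => hle m hm.2

lemma semisimple_of_subsingleton (X : Type*) [AddCommGroup X] [Module A X] [Subsingleton X] :
    IsSemisimpleModule A X := by
  apply IsSemisimpleModule.of_sSup_simples_eq_top
  exact Subsingleton.elim _ _

lemma semisimple_prod (X Y : Type*) [AddCommGroup X] [Module A X] [AddCommGroup Y] [Module A Y]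
    [IsSemisimpleModule A X] [IsSemisimpleModule A Y] : IsSemisimpleModule A (X × Y) := by
  have h1 : IsSemisimpleModule A (Submodule.fst A X Y) :=
    IsSemisimpleModule.congr (Submodule.fstEquiv A X Y)
  have h2 : IsSemisimpleModule A (Submodule.snd A X Y) :=
    IsSemisimpleModule.congr (Submodule.sndEquiv A X Y)
  have h3 : IsSemisimpleModule A ↥(Submodule.fst A X Y ⊔ Submodule.snd A X Y) :=
    IsSemisimpleModule.sup h1 h2
  haveI := h3
  exact IsSemisimpleModule.congr
    (Submodule.topEquiv.symm ≪≫ₗ LinearEquiv.ofEq _ _ (Submodule.fst_sup_snd A X Y).symm)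

lemma semisimple_quot_inf (s : Finset (Ideal A)) (hs : ∀ m ∈ s, m.IsMaximal) :
    IsSemisimpleModule A (A ⧸ (s.inf id : Ideal A)) := by
  classical
  induction s using Finset.induction_on with
  | empty =>
    have : Subsingleton (A ⧸ (Finset.inf ∅ id : Ideal A)) := by
      rw [Finset.inf_empty]
      exact Submodule.Quotient.subsingleton_iff.2 rfl
    exact semisimple_of_subsingleton _
  | @insert m t hmem ih =>
    have hI : IsSemisimpleModule A (A ⧸ (t.inf id : Ideal A)) :=
      ih fun k hk => hs k (Finset.mem_insert_of_mem hk)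
    have hmmax : m.IsMaximal := hs m (Finset.mem_insert_self m t)
    have hsimple : IsSimpleModule A (A ⧸ m) := by
      rw [isSimpleModule_iff_isCoatom]
      exact Ideal.isMaximal_def.mp hmmax
    have hprod : IsSemisimpleModule A ((A ⧸ m) × (A ⧸ (t.inf id : Ideal A))) :=
      semisimple_prod _ _
    set f : A →ₗ[A] (A ⧸ m) × (A ⧸ (t.inf id : Ideal A)) := (m.mkQ).prod ((t.inf id).mkQ)
      with hf
    have hker : LinearMap.ker f = m ⊓ t.inf id := by
      rw [hf, LinearMap.ker_prod, Submodule.ker_mkQ, Submodule.ker_mkQ]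
    have e : (A ⧸ ((insert m t).inf id : Ideal A)) ≃ₗ[A] ↥(LinearMap.range f) :=
      Submodule.quotEquivOfEq _ _ (by rw [Finset.inf_insert, id, hker]) ≪≫ₗ
        f.quotKerEquivRange
    haveI := hprod
    exact IsSemisimpleModule.congr e

lemma semisimple_of_jac_killed [IsArtinianRing A] (X : Type*) [AddCommGroup X] [Module A X]
    (h : ∀ j ∈ (J : Ideal A), ∀ x : X, j • x = 0) : IsSemisimpleModule A X := by
  have hAJ : IsSemisimpleModule A (A ⧸ (J : Ideal A)) := by
    obtain ⟨s, hs, heq⟩ := jac_eq_finite_inf (A := A)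
    rw [heq]
    exact semisimple_quot_inf s hs
  apply isSemisimpleModule_of_isSemisimpleModule_submodule'
    (p := fun x : X => Submodule.span A {x})
  · intro x
    set g := LinearMap.toSpanSingleton A X x with hg
    have hJker : (J : Ideal A) ≤ LinearMap.ker g := fun j hj => by
      rw [LinearMap.mem_ker, hg]
      exact h j hj x
    have e : ((A ⧸ (J : Ideal A)) ⧸
        Submodule.map (J : Ideal A).mkQ (LinearMap.ker g)) ≃ₗ[A] ↥(Submodule.span A {x}) :=
      Submodule.quotientQuotientEquivQuotient _ _ hJker ≪≫ₗ g.quotKerEquivRange ≪≫ₗ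
        LinearEquiv.ofEq _ _ (LinearMap.span_singleton_eq_range A X x).symm
    haveI := hAJ
    exact IsSemisimpleModule.congr e.symm
  · rw [eq_top_iff]
    intro y _
    exact Submodule.mem_iSup_of_mem y (Submodule.mem_span_singleton_self y)

lemma noeth_step [IsArtinianRing A] {M : Type*} [AddCommGroup M] [Module A M] [IsArtinian A M]
    (N N' : Submodule A M) (hle : N' ≤ N) (hsub : (J : Ideal A) • N ≤ N')
    (hN' : IsNoetherian A N') : IsNoetherian A N := by
  set P : Submodule A ↥N := Submodule.comap N.subtype N' with hP
  haveI : IsNoetherian A ↥P :=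
    isNoetherian_of_linearEquiv (Submodule.comapSubtypeEquivOfLe hle).symm
  haveI hart : IsArtinian A (↥N ⧸ P) := inferInstance
  have hsem : IsSemisimpleModule A (↥N ⧸ P) := by
    apply semisimple_of_jac_killed
    intro j hj x
    obtain ⟨y, rfl⟩ := Submodule.Quotient.mk_surjective P x
    rw [← Submodule.Quotient.mk_smul, Submodule.Quotient.mk_eq_zero]
    show (j • y : ↥N).1 ∈ N'
    exact hsub (Submodule.smul_mem_smul hj y.2)
  have hq : IsNoetherian A (↥N ⧸ P) := (IsSemisimpleModule.finite_tfae.out 2 1).mp hart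
  exact (isNoetherian_iff_submodule_quotient P).2 ⟨inferInstance, hq⟩

theorem hl_noetherian [IsArtinianRing A] (M : Type*) [AddCommGroup M] [Module A M]
    [Module.Finite A M] : IsNoetherian A M := by
  haveI : IsArtinian A M := isArtinian_of_fg_of_artinian'
  obtain ⟨n, hn⟩ := jpow_nilpotent (A := A)
  have key : ∀ k, IsNoetherian A ↥((jpow A (n+1-k) • ⊤ : Submodule A M)) := by
    intro k
    induction k with
    | zero =>
      simp only [Nat.sub_zero]
      exact isNoetherian_of_linearEquiv (LinearEquiv.ofEq _ _
        (show jpow A (n+1) • (⊤ : Submodule A M) = ⊥ by rw [hn, Submodule.bot_smul])).symm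
    | succ k ih =>
      rcases Nat.eq_zero_or_pos (n+1-k) with h0 | hpos
      · rw [show n+1-(k+1) = 0 by omega]
        rw [h0] at ih
        exact ih
      · set t := n+1-(k+1) with ht
        have htk : n+1-k = t+1 := by omega
        rw [htk] at ih
        apply noeth_step (jpow A t • ⊤) (jpow A (t+1) • ⊤) _ _ ih
        · rw [jpow_succ, ideal_smul_assoc]
          exact Submodule.smul_le_right
        · rw [jpow_succ, ideal_smul_assoc]
  have := key (n+1)
  rw [Nat.sub_self, jpow_zero, Submodule.top_smul] at this
  exact isNoetherian_of_linearEquiv (Submodule.topEquiv (R := A) (M := M))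

end HL2

variable {A : Type} [Ring A]

section MainHelpers

variable (C : Set (ModuleCat A))
  (hiso : ∀ M N : ModuleCat A, (M ≃ₗ[A] N) → M ∈ C → N ∈ C)

include hiso

lemma subMin_iso {M N : ModuleCat A} (e : M ≃ₗ[A] N) (hM : M ∈ subMin C) :
    N ∈ subMin C := by
  obtain ⟨hMC, hnt, hmin⟩ := hM
  refine ⟨hiso M N e hMC, ?_, ?_⟩
  · haveI := hnt; exact e.symm.toEquiv.nontrivial
  · intro L hLb hLt hLC
    set p : Submodule A M := L.map (e.symm : N →ₗ[A] M) with hp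
    have hinj := Submodule.map_injective_of_injective
      (f := (e.symm : N →ₗ[A] M)) e.symm.injective
    have hpb : p ≠ ⊥ := fun h => hLb (hinj (by rwa [Submodule.map_bot]))
    have hpt : p ≠ ⊤ := fun h => hLt (hinj (by
      rw [Submodule.map_top, LinearEquiv.range]; exact h))
    exact hmin p hpb hpt
      (hiso (ModuleCat.of A L) (ModuleCat.of A p) (e.symm.submoduleMap L) hLC)

lemma exists_subMin (M : ModuleCat A) [IsArtinian A M] (hM : M ∈ C)
    (hnt : Nontrivial M) :
    ∃ K : Submodule A M, K ≠ ⊥ ∧ ModuleCat.of A K ∈ subMin C := by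
  have htopne : (⊤ : Submodule A M) ≠ ⊥ := by
    intro h
    obtain ⟨x, y, hxy⟩ := hnt
    exact hxy (by
      have hx : x ∈ (⊥ : Submodule A M) := h ▸ Submodule.mem_top
      have hy : y ∈ (⊥ : Submodule A M) := h ▸ Submodule.mem_top
      rw [Submodule.mem_bot] at hx hy
      rw [hx, hy])
  obtain ⟨K, ⟨hKb, hKC⟩, hmin⟩ := (wellFounded_lt (α := Submodule A M)).has_min
    {K : Submodule A M | K ≠ ⊥ ∧ ModuleCat.of A K ∈ C}
    ⟨⊤, htopne, hiso M (ModuleCat.of A (⊤ : Submodule A M)) Submodule.topEquiv.symm hM⟩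
  refine ⟨K, hKb, hKC, Submodule.nontrivial_iff_ne_bot.2 hKb, ?_⟩
  intro P hPb hPt hPC
  set Q := P.map K.subtype with hQdef
  have hinj := Submodule.map_injective_of_injective
    (f := K.subtype) K.injective_subtype
  have hQb : Q ≠ ⊥ := fun h => hPb (hinj (by rwa [Submodule.map_bot]))
  have hQlt : Q < K := by
    refine lt_of_le_of_ne (Submodule.map_subtype_le K P) fun h => hPt (hinj ?_)
    rw [Submodule.map_subtype_top]; exact h
  exact hmin Q ⟨hQb, hiso (ModuleCat.of A P) (ModuleCat.of A Q)
    (Submodule.equivMapOfInjective K.subtype K.injective_subtype P) hPC⟩ hQlt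

end MainHelpers

section Filtration

variable [IsArtinianRing A] (C : Set (ModuleCat A))
  (hfg : ∀ N ∈ C, Module.Finite A N)
  (hiso : ∀ M N : ModuleCat A, (M ≃ₗ[A] N) → M ∈ C → N ∈ C)
  (hcoker : ∀ (M N : ModuleCat A), M ∈ C → N ∈ C → ∀ f : M →ₗ[A] N,
      Function.Injective f → ModuleCat.of A (N ⧸ LinearMap.range f) ∈ C)

include hfg hiso hcoker

lemma filtered_of_mem (M : ModuleCat A) (hM : M ∈ C) (hnt : Nontrivial M) :
    Filtered (subMin C) M := by
  haveI : Module.Finite A M := hfg M hM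
  haveI : IsArtinian A M := isArtinian_of_fg_of_artinian'
  haveI : IsNoetherian A M := hl_noetherian (A := A) M.carrier
  have key : ∀ L : Submodule A M, (ModuleCat.of A (M ⧸ L) ∈ C) → Nontrivial (M ⧸ L) →
      ∃ (n : ℕ) (s : Fin (n+1) → Submodule A M), s 0 = L ∧ s (Fin.last n) = ⊤ ∧
        StrictMono s ∧ ∀ i : Fin n, ModuleCat.of A
          (↥(s i.succ) ⧸ (s i.castSucc).comap (s i.succ).subtype) ∈ subMin C := by
    intro L
    induction L using ((wellFounded_gt (α := Submodule A ↑M))).induction with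
    | _ L IH =>
    intro hML hntL
    haveI : IsArtinian A ↥(ModuleCat.of A (M ⧸ L)) := inferInstanceAs (IsArtinian A (M ⧸ L))
    obtain ⟨K, hKb, hKsub⟩ := exists_subMin C hiso (ModuleCat.of A (M ⧸ L)) hML hntL
    have hKC : ModuleCat.of A ↥K ∈ C := hKsub.1
    set L' : Submodule A M := K.comap L.mkQ with hL'def
    have hmap : Submodule.map L.mkQ L' = K := by
      rw [hL'def, Submodule.map_comap_eq, Submodule.range_mkQ, top_inf_eq]
    have hLle : L ≤ L' := by
      intro x hx
      show L.mkQ x ∈ K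
      have : L.mkQ x = 0 := (Submodule.Quotient.mk_eq_zero L).2 hx
      rw [this]; exact K.zero_mem
    have hLL' : L < L' := by
      refine lt_of_le_of_ne hLle fun h => hKb ?_
      rw [← hmap, ← h]
      apply eq_bot_iff.2
      rw [Submodule.map_le_iff_le_comap]
      intro x hx
      show L.mkQ x ∈ (⊥ : Submodule A (M ⧸ L))
      rw [Submodule.mem_bot]
      exact (Submodule.Quotient.mk_eq_zero L).2 hx
    -- the bottom quotient piece
    set f : ↥L' →ₗ[A] (M ⧸ L) := L.mkQ.comp L'.subtype with hfdef
    have hker : LinearMap.ker f = L.comap L'.subtype := by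
      rw [hfdef, LinearMap.ker_comp, Submodule.ker_mkQ]
    have hrange : LinearMap.range f = K := by
      rw [hfdef, LinearMap.range_comp, Submodule.range_subtype, hmap]
    have e1 : (↥L' ⧸ L.comap L'.subtype) ≃ₗ[A] ↥K :=
      (Submodule.quotEquivOfEq _ _ hker.symm) ≪≫ₗ f.quotKerEquivRange ≪≫ₗ
        LinearEquiv.ofEq _ _ hrange
    have hfirst : ModuleCat.of A (↥L' ⧸ L.comap L'.subtype) ∈ subMin C :=
      subMin_iso C hiso (M := ModuleCat.of A ↥K)
        (N := ModuleCat.of A (↥L' ⧸ L.comap L'.subtype)) e1.symm hKsub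
    -- quotient by L' is in C
    have hML' : ModuleCat.of A (M ⧸ L') ∈ C := by
      have h1 := hcoker (ModuleCat.of A ↥K) (ModuleCat.of A (M ⧸ L)) hKC hML
        K.subtype K.injective_subtype
      have e2 : ((M ⧸ L) ⧸ LinearMap.range K.subtype) ≃ₗ[A] (M ⧸ L') :=
        Submodule.quotEquivOfEq _ _ (by rw [Submodule.range_subtype, ← hmap]) ≪≫ₗ
          Submodule.quotientQuotientEquivQuotient L L' hLle
      exact hiso _ _ e2 h1
    by_cases hL'top : L' = ⊤
    · -- chain of length 1
      refine ⟨1, fun i => if i = 0 then L else L', ?_, ?_, ?_, ?_⟩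
      · simp
      · beta_reduce
        have : (Fin.last 1) ≠ 0 := by decide
        rw [if_neg this, hL'top]
      · rw [Fin.strictMono_iff_lt_succ]
        intro i
        have hi : i = 0 := Subsingleton.elim i 0
        subst hi
        beta_reduce
        have h1 : ((0 : Fin 1).castSucc) = (0 : Fin 2) := rfl
        have h2 : ((0 : Fin 1).succ) ≠ (0 : Fin 2) := by decide
        rw [h1, if_pos rfl, if_neg h2]
        exact hLL'
      · intro i
        have hi : i = 0 := Subsingleton.elim i 0
        subst hi
        beta_reduce
        have h2 : ((0 : Fin 1).succ) ≠ (0 : Fin 2) := by decide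
        have e0 : (if ((0 : Fin 1).castSucc = (0 : Fin 2)) then L else L') = L := if_pos rfl
        have e1' : (if ((0 : Fin 1).succ = (0 : Fin 2)) then L else L') = L' := if_neg h2
        rw [e0, e1']
        exact hfirst
    · -- recurse
      have hntL' : Nontrivial (M ⧸ L') :=
        not_subsingleton_iff_nontrivial.1
          (fun h => hL'top (Submodule.Quotient.subsingleton_iff.1 h))
      obtain ⟨n, s, hs0, hslast, hmono, hquot⟩ := IH L' hLL' hML' hntL'
      refine ⟨n+1, Fin.cases L s, ?_, ?_, ?_, ?_⟩
      · beta_reduce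
        rw [Fin.cases_zero]
      · beta_reduce
        rw [← Fin.succ_last, Fin.cases_succ, hslast]
      · rw [Fin.strictMono_iff_lt_succ]
        intro i
        beta_reduce
        induction i using Fin.cases with
        | zero =>
          have hc : ((0 : Fin (n+1)).castSucc) = (0 : Fin (n+2)) := rfl
          have hs : ((0 : Fin (n+1)).succ) = Fin.succ (0 : Fin (n+1)) := rfl
          rw [hc, hs, Fin.cases_zero, Fin.cases_succ, hs0]
          exact hLL'
        | succ j =>
          have hc : ((Fin.succ j).castSucc) = Fin.succ (j.castSucc) :=
            (Fin.succ_castSucc j).symm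
          have hs : ((Fin.succ j).succ) = Fin.succ (j.succ) := rfl
          rw [hc, hs, Fin.cases_succ, Fin.cases_succ]
          exact hmono (Fin.castSucc_lt_succ (i := j))
      · intro i
        beta_reduce
        induction i using Fin.cases with
        | zero =>
          have hc : (Fin.cases L s ((0 : Fin (n+1)).castSucc) : Submodule A M) = L := by
            rw [show ((0 : Fin (n+1)).castSucc) = (0 : Fin (n+2)) from rfl, Fin.cases_zero]
          have hs : (Fin.cases L s ((0 : Fin (n+1)).succ) : Submodule A M) = L' := by
            rw [show ((0 : Fin (n+1)).succ) = Fin.succ (0 : Fin (n+1)) from rfl,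
              Fin.cases_succ, hs0]
          rw [hc, hs]
          exact hfirst
        | succ j =>
          have hc : (Fin.cases L s ((Fin.succ j).castSucc) : Submodule A M)
              = s j.castSucc := by
            rw [show ((Fin.succ j).castSucc) = Fin.succ (j.castSucc) from
              (Fin.succ_castSucc j).symm, Fin.cases_succ]
          have hs : (Fin.cases L s ((Fin.succ j).succ) : Submodule A M) = s j.succ := by
            rw [show ((Fin.succ j).succ) = Fin.succ (j.succ) from rfl, Fin.cases_succ]
          rw [hc, hs]
          exact hquot j
  have hbot : ModuleCat.of A (M ⧸ (⊥ : Submodule A M)) ∈ C :=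
    hiso M _ (Submodule.quotEquivOfEqBot ⊥ rfl).symm hM
  have hntbot : Nontrivial (M ⧸ (⊥ : Submodule A M)) :=
    (Submodule.quotEquivOfEqBot (⊥ : Submodule A M) rfl).toEquiv.nontrivial
  exact key ⊥ hbot hntbot

end Filtration

section Part2

variable (C : Set (ModuleCat A))
  (hiso : ∀ M N : ModuleCat A, (M ≃ₗ[A] N) → M ∈ C → N ∈ C)
  (hext : ∀ (M : ModuleCat A) (L : Submodule A M),
      ModuleCat.of A L ∈ C → ModuleCat.of A (M ⧸ L) ∈ C → M ∈ C)

include hiso hext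

lemma mem_of_filtered (M : ModuleCat A) (hnt : Nontrivial M)
    (hf : Filtered (subMin C) M) : M ∈ C := by
  obtain ⟨n, s, hs0, hslast, hmono, hquot⟩ := hf
  rcases Nat.eq_zero_or_pos n with rfl | hn
  · exfalso
    have : (⊥ : Submodule A M) = ⊤ := by rw [← hs0, ← hslast]; rfl
    obtain ⟨x, y, hxy⟩ := hnt
    apply hxy
    have hx : x ∈ (⊥ : Submodule A M) := this ▸ Submodule.mem_top
    have hy : y ∈ (⊥ : Submodule A M) := this ▸ Submodule.mem_top
    rw [Submodule.mem_bot] at hx hy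
    rw [hx, hy]
  · have claim : ∀ k : ℕ, (hk : k < n) →
        ModuleCat.of A ↥(s ⟨k+1, by omega⟩) ∈ C := by
      intro k
      induction k with
      | zero =>
        intro hk
        set i0 : Fin n := ⟨0, hk⟩ with hi0
        have h1 := hquot i0
        have hcs : s i0.castSucc = ⊥ := by
          rw [show i0.castSucc = (0 : Fin (n+1)) from rfl, hs0]
        rw [hcs] at h1
        have hcb : (⊥ : Submodule A M).comap (s i0.succ).subtype = ⊥ := by
          rw [Submodule.comap_bot, Submodule.ker_subtype]
        rw [hcb] at h1
        have e : (↥(s i0.succ) ⧸ (⊥ : Submodule A ↥(s i0.succ))) ≃ₗ[A] ↥(s i0.succ) :=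
          Submodule.quotEquivOfEqBot _ rfl
        have := hiso _ (ModuleCat.of A ↥(s i0.succ)) e h1.1
        exact this
      | succ k ihk =>
        intro hk
        have hk' : k < n := by omega
        set i : Fin n := ⟨k+1, hk⟩ with hidef
        have hle : s i.castSucc ≤ s i.succ := le_of_lt (hmono (Fin.castSucc_lt_succ (i := i)))
        have e : ↥((s i.castSucc).comap (s i.succ).subtype) ≃ₗ[A] ↥(s i.castSucc) :=
          Submodule.comapSubtypeEquivOfLe hle
        have hsub : ModuleCat.of A ↥((s i.castSucc).comap (s i.succ).subtype) ∈ C := by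
          have hc : s i.castSucc = s ⟨k+1, by omega⟩ := rfl
          exact hiso _ _ e.symm (hc ▸ ihk hk')
        have := hext (ModuleCat.of A ↥(s i.succ)) ((s i.castSucc).comap (s i.succ).subtype)
          hsub (hquot i).1
        exact this
    have hlast := claim (n-1) (by omega)
    have hidx : (⟨(n-1)+1, by omega⟩ : Fin (n+1)) = Fin.last n := by
      apply Fin.ext
      simp
      omega
    rw [hidx, hslast] at hlast
    exact hiso _ M Submodule.topEquiv hlast

end Part2

section Part3

lemma subMin_subset (C : Set (ModuleCat A))
    (hiso : ∀ M N : ModuleCat A, (M ≃ₗ[A] N) → M ∈ C → N ∈ C)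
    (X : Set (ModuleCat A)) (hXC : X ⊆ C)
    (hXiso : ∀ M N : ModuleCat A, (M ≃ₗ[A] N) → M ∈ X → N ∈ X)
    (hfilt : ∀ M ∈ C, Nontrivial M → Filtered X M) : subMin C ⊆ X := by
  intro M hM
  obtain ⟨hMC, hnt, hmin⟩ := hM
  obtain ⟨n, s, hs0, hslast, hmono, hquot⟩ := hfilt M hMC hnt
  rcases Nat.eq_zero_or_pos n with rfl | hn
  · exfalso
    have : (⊥ : Submodule A M) = ⊤ := by rw [← hs0, ← hslast]; rfl
    obtain ⟨x, y, hxy⟩ := hnt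
    apply hxy
    have hx : x ∈ (⊥ : Submodule A M) := this ▸ Submodule.mem_top
    have hy : y ∈ (⊥ : Submodule A M) := this ▸ Submodule.mem_top
    rw [Submodule.mem_bot] at hx hy
    rw [hx, hy]
  · set i0 : Fin n := ⟨0, hn⟩ with hi0
    have h1 := hquot i0
    have hcs : s i0.castSucc = ⊥ := by
      rw [show i0.castSucc = (0 : Fin (n+1)) from rfl, hs0]
    rw [hcs] at h1
    have hcb : (⊥ : Submodule A M).comap (s i0.succ).subtype = ⊥ := by
      rw [Submodule.comap_bot, Submodule.ker_subtype]
    rw [hcb] at h1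
    have e : (↥(s i0.succ) ⧸ (⊥ : Submodule A ↥(s i0.succ))) ≃ₗ[A] ↥(s i0.succ) :=
      Submodule.quotEquivOfEqBot _ rfl
    have hs1X : ModuleCat.of A ↥(s i0.succ) ∈ X := hXiso _ _ e h1
    have hbotlt : (⊥ : Submodule A M) < s i0.succ := by
      rw [← hs0, show (0 : Fin (n+1)) = i0.castSucc from rfl]
      exact hmono (Fin.castSucc_lt_succ (i := i0))
    by_cases htop : s i0.succ = ⊤
    · have e2 : (ModuleCat.of A ↥(s i0.succ) : ModuleCat A) ≃ₗ[A] M := by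
        rw [htop]; exact Submodule.topEquiv
      exact hXiso _ _ e2 hs1X
    · exfalso
      exact hmin (s i0.succ) (by
          intro h
          exact (ne_of_gt hbotlt) h) htop (hXC hs1X)

end Part3


/-- If `C` is a nonzero subcategory of `mod A` (`A` artinian) closed under extensions and
cokernels of monomorphisms, then `C̲` is the smallest class of modules filtering `C`:
every nonzero module of `C` is `C̲`-filtered, every nonzero `C̲`-filtered module lies in `C`,
and every class `X ⊆ C` that filters `C` contains `C̲`. -/
theorem stmt_10 [IsArtinianRing A] (C : Set (ModuleCat A))
    (hC : ∃ N ∈ C, Nontrivial N)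
    (hfg : ∀ N ∈ C, Module.Finite A N)
    (hiso : ∀ M N : ModuleCat A, (M ≃ₗ[A] N) → M ∈ C → N ∈ C)
    (hext : ∀ (M : ModuleCat A) (L : Submodule A M),
      ModuleCat.of A L ∈ C → ModuleCat.of A (M ⧸ L) ∈ C → M ∈ C)
    (hcoker : ∀ (M N : ModuleCat A), M ∈ C → N ∈ C → ∀ f : M →ₗ[A] N,
      Function.Injective f → ModuleCat.of A (N ⧸ LinearMap.range f) ∈ C) :
    (∀ M ∈ C, Nontrivial M → Filtered (subMin C) M) ∧
    (∀ M : ModuleCat A, Nontrivial M → Filtered (subMin C) M → M ∈ C) ∧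
    (∀ X ⊆ C, (∀ M N : ModuleCat A, (M ≃ₗ[A] N) → M ∈ X → N ∈ X) →
      (∀ M ∈ C, Nontrivial M → Filtered X M) → subMin C ⊆ X) := by
  refine ⟨fun M hM hnt => filtered_of_mem C hfg hiso hcoker M hM hnt,
    fun M hnt hf => mem_of_filtered C hiso hext M hnt hf,
    fun X hXC hXiso hfilt => subMin_subset C hiso X hXC hXiso hfilt⟩
end

section
/- Let C be a nonzero subcategory of mod A closed under extensions and direct summands, and suppose 0 → L → ⊕ᵢ₌₁ⁿ Mᵢ → N → 0 is an almost split sequence with L ∈ C̄ and N ∈ C̲. Then n = 1 (the middle term is indecomposable), and the middle term belongs to neither C̲ nor C̄. -/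
open CategoryTheory

variable {A : Type} [Ring A]

/-- `0 → L → Mo → N → 0` (given by `f`, `g`) is an almost split (Auslander–Reiten)
sequence: it is a non-split short exact sequence, `g` is right almost split and `f` is
left almost split. -/
def IsAlmostSplitSeq {L Mo N : ModuleCat.{0} A} (f : L →ₗ[A] Mo) (g : Mo →ₗ[A] N) : Prop :=
  Function.Injective f ∧ Function.Surjective g ∧ LinearMap.ker g = LinearMap.range f ∧
  (¬ ∃ s : N →ₗ[A] Mo, g ∘ₗ s = LinearMap.id) ∧
  (∀ (X : ModuleCat.{0} A) (h : X →ₗ[A] N), (¬ ∃ s : N →ₗ[A] X, h ∘ₗ s = LinearMap.id) →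
    ∃ h' : X →ₗ[A] Mo, g ∘ₗ h' = h) ∧
  (∀ (X : ModuleCat.{0} A) (h : L →ₗ[A] X), (¬ ∃ s : X →ₗ[A] L, s ∘ₗ h = LinearMap.id) →
    ∃ h' : Mo →ₗ[A] X, h' ∘ₗ f = h)


section Aux

variable {A : Type} [Ring A] {L M N K : Type}
  [AddCommGroup L] [AddCommGroup M] [AddCommGroup N] [AddCommGroup K]
  [Module A L] [Module A M] [Module A N] [Module A K]

/-- Factor a map killing `ker g` through the surjection `g`. -/
theorem asFactor (g : M →ₗ[A] N) (hg : Function.Surjective g)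
    {W : Type} [AddCommGroup W] [Module A W]
    (p : M →ₗ[A] W) (hle : ∀ x, g x = 0 → p x = 0) :
    ∃ s : N →ₗ[A] W, ∀ x, s (g x) = p x := by
  have key : ∀ x y, g x = g y → p x = p y := by
    intro x y h
    have h1 : g (x - y) = 0 := by rw [map_sub, h, sub_self]
    have h2 := hle _ h1
    rw [map_sub, sub_eq_zero] at h2
    exact h2
  refine ⟨⟨⟨fun y => p (Function.surjInv hg y), ?_⟩, ?_⟩, ?_⟩
  · intro a b
    rw [key (Function.surjInv hg (a + b)) (Function.surjInv hg a + Function.surjInv hg b)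
      (by rw [map_add, Function.surjInv_eq hg, Function.surjInv_eq hg, Function.surjInv_eq hg]),
      map_add]
  · intro r a
    dsimp only
    rw [key (Function.surjInv hg (r • a)) (r • Function.surjInv hg a)
      (by simp [Function.surjInv_eq hg, map_smul]), map_smul]
    rfl
  · intro x
    exact key _ _ (Function.surjInv_eq hg (g x))

/-- Any endomorphism `θ` of the middle term of an almost split sequence satisfying
`θ ∘ f = f` is surjective. -/
theorem asLeftSurj (f : L →ₗ[A] M) (g : M →ₗ[A] N)
    (hfinj : Function.Injective f) (hg : Function.Surjective g)
    (hker : LinearMap.ker g = LinearMap.range f)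
    (hns : ¬ ∃ s : N →ₗ[A] M, g ∘ₗ s = LinearMap.id)
    (ras' : ∀ h : N →ₗ[A] N, (¬ ∃ s : N →ₗ[A] N, h ∘ₗ s = LinearMap.id) →
      ∃ t : N →ₗ[A] M, g ∘ₗ t = h)
    (θ : M →ₗ[A] M) (hθ : ∀ l, θ (f l) = f l) : Function.Surjective θ := by
  have hmemker : ∀ x, g x = 0 → ∃ l, f l = x := by
    intro x hx
    have : x ∈ LinearMap.range f := hker ▸ (LinearMap.mem_ker.mpr hx)
    exact this
  have gf0 : ∀ l, g (f l) = 0 := by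
    intro l
    have : f l ∈ LinearMap.ker g := by rw [hker]; exact ⟨l, rfl⟩
    exact this
  obtain ⟨tb, htb⟩ := asFactor g hg (g ∘ₗ θ) (by
    intro x hx
    obtain ⟨l, rfl⟩ := hmemker x hx
    simp [hθ l, gf0 l])
  simp only [LinearMap.coe_comp, Function.comp_apply] at htb
  by_cases hs : Function.Surjective tb
  · intro m
    obtain ⟨y, hy⟩ := hs (g m)
    obtain ⟨x₀, rfl⟩ := hg y
    rw [htb] at hy
    have : g (m - θ x₀) = 0 := by
      rw [map_sub, hy, sub_self]
    obtain ⟨l, hl⟩ := hmemker _ this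
    exact ⟨x₀ + f l, by rw [map_add, hθ l, hl]; abel⟩
  · exfalso
    obtain ⟨t, ht⟩ := ras' tb (by
      rintro ⟨s, hs'⟩
      exact hs fun y => ⟨s y, LinearMap.congr_fun hs' y⟩)
    set ψ : M →ₗ[A] M := θ - t ∘ₗ g with hψdef
    have hψf : ∀ l, ψ (f l) = f l := by
      intro l
      simp [hψdef, hθ l, gf0 l]
    have hmem : ∀ x, ψ x ∈ LinearMap.range f := by
      intro x
      rw [← hker, LinearMap.mem_ker]
      have h1 : g (t (g x)) = tb (g x) := LinearMap.congr_fun ht (g x)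
      simp [hψdef, h1, htb x]
    set e := LinearEquiv.ofInjective f hfinj with hedef
    set r : M →ₗ[A] L := e.symm.toLinearMap ∘ₗ LinearMap.codRestrict (LinearMap.range f) ψ hmem
      with hrdef
    have hr : ∀ l, r (f l) = l := by
      intro l
      have h1 : (LinearMap.codRestrict (LinearMap.range f) ψ hmem) (f l) = e l := by
        apply Subtype.ext
        rw [LinearMap.codRestrict_apply, hψf l, LinearEquiv.ofInjective_apply]
      have : r (f l) = e.symm (e l) := by rw [hrdef]; simp [h1]
      rw [this, LinearEquiv.symm_apply_apply]
    obtain ⟨s, hs2⟩ := asFactor g hg (LinearMap.id - f ∘ₗ r) (by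
      intro x hx
      obtain ⟨l, rfl⟩ := hmemker x hx
      simp [hr l])
    apply hns
    refine ⟨s, ?_⟩
    apply LinearMap.ext
    intro y
    obtain ⟨x, rfl⟩ := hg y
    have : s (g x) = x - f (r x) := by rw [hs2 x]; simp
    simp [this, gf0]

/-- Any endomorphism `φ` of the middle term of an almost split sequence satisfying
`g ∘ φ = g` is injective. -/
theorem asRightInj (f : L →ₗ[A] M) (g : M →ₗ[A] N)
    (hfinj : Function.Injective f) (hg : Function.Surjective g)
    (hker : LinearMap.ker g = LinearMap.range f)
    (hns : ¬ ∃ s : N →ₗ[A] M, g ∘ₗ s = LinearMap.id)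
    (las' : ∀ h : L →ₗ[A] L, (¬ ∃ s : L →ₗ[A] L, s ∘ₗ h = LinearMap.id) →
      ∃ t : M →ₗ[A] L, t ∘ₗ f = h)
    (φ : M →ₗ[A] M) (hφ : ∀ x, g (φ x) = g x) : Function.Injective φ := by
  have hmemker : ∀ x, g x = 0 → ∃ l, f l = x := by
    intro x hx
    have : x ∈ LinearMap.range f := hker ▸ (LinearMap.mem_ker.mpr hx)
    exact this
  have gf0 : ∀ l, g (f l) = 0 := by
    intro l
    have : f l ∈ LinearMap.ker g := by rw [hker]; exact ⟨l, rfl⟩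
    exact this
  have hmem : ∀ l, φ (f l) ∈ LinearMap.range f := by
    intro l
    rw [← hker, LinearMap.mem_ker, hφ, gf0]
  set e := LinearEquiv.ofInjective f hfinj with hedef
  set φ' : L →ₗ[A] L := e.symm.toLinearMap ∘ₗ
    LinearMap.codRestrict (LinearMap.range f) (φ ∘ₗ f) hmem with hφ'def
  have key : ∀ l, f (φ' l) = φ (f l) := by
    intro l
    have h1 : e (φ' l) = ⟨φ (f l), hmem l⟩ := by
      rw [hφ'def]
      simp only [LinearMap.coe_comp, Function.comp_apply, LinearEquiv.coe_coe,
        LinearEquiv.apply_symm_apply]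
      apply Subtype.ext
      rw [LinearMap.codRestrict_apply]
      rfl
    have h2 : f (φ' l) = ↑(e (φ' l)) := (LinearEquiv.ofInjective_apply f (h := hfinj) (φ' l)).symm
    rw [h2, h1]
  have hzero : ∀ x, φ x = 0 → x = 0 := by
    by_cases hinj : Function.Injective φ'
    · intro x hx
      have hgx : g x = 0 := by rw [← hφ, hx, map_zero]
      obtain ⟨l, rfl⟩ := hmemker x hgx
      have : f (φ' l) = 0 := by rw [key, hx]
      have h0 : φ' l = φ' 0 := by
        apply hfinj
        rw [this, map_zero, map_zero]
      have := hinj h0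
      rw [this, map_zero]
    · exfalso
      obtain ⟨t, ht⟩ := las' φ' (by
        rintro ⟨s, hs⟩
        apply hinj
        intro a b hab
        have ha := LinearMap.congr_fun hs a
        have hb := LinearMap.congr_fun hs b
        simp only [LinearMap.coe_comp, Function.comp_apply, LinearMap.id_apply] at ha hb
        rw [← ha, ← hb, hab])
      set ψ : M →ₗ[A] M := φ - f ∘ₗ t with hψdef
      obtain ⟨s, hs2⟩ := asFactor g hg ψ (by
        intro x hx
        obtain ⟨l, rfl⟩ := hmemker x hx
        have h1 : t (f l) = φ' l := LinearMap.congr_fun ht l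
        simp [hψdef, h1, key l])
      apply hns
      refine ⟨s, ?_⟩
      apply LinearMap.ext
      intro y
      obtain ⟨x, rfl⟩ := hg y
      have : s (g x) = φ x - f (t x) := by rw [hs2 x]; rfl
      simp [this, hφ, gf0]
  intro a b hab
  have : φ (a - b) = 0 := by rw [map_sub, hab, sub_self]
  have := hzero _ this
  rwa [sub_eq_zero] at this

/-- Component of the left map of an almost split sequence: not injective implies surjective. -/
theorem asFDich (f : L →ₗ[A] M) (g : M →ₗ[A] N)
    (hfinj : Function.Injective f) (hg : Function.Surjective g)
    (hker : LinearMap.ker g = LinearMap.range f)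
    (hns : ¬ ∃ s : N →ₗ[A] M, g ∘ₗ s = LinearMap.id)
    (ras' : ∀ h : N →ₗ[A] N, (¬ ∃ s : N →ₗ[A] N, h ∘ₗ s = LinearMap.id) →
      ∃ t : N →ₗ[A] M, g ∘ₗ t = h)
    (las'' : ∀ (X : Type) [AddCommGroup X] [Module A X] (h : L →ₗ[A] X),
      (¬ ∃ s : X →ₗ[A] L, s ∘ₗ h = LinearMap.id) → ∃ w : M →ₗ[A] X, w ∘ₗ f = h)
    (ι : K →ₗ[A] M) (π : M →ₗ[A] K) (hπι : ∀ k, π (ι k) = k)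
    (hni : ¬ Function.Injective (π ∘ₗ f)) : Function.Surjective (π ∘ₗ f) := by
  set fi : L →ₗ[A] K := π ∘ₗ f with hfidef
  set v : L →ₗ[A] LinearMap.range fi :=
    LinearMap.codRestrict (LinearMap.range fi) fi (fun l => ⟨l, rfl⟩) with hvdef
  have hvni : ¬ Function.Injective v := by
    intro hv
    apply hni
    intro a b hab
    apply hv
    apply Subtype.val_injective
    exact hab
  obtain ⟨w, hw⟩ := las'' (LinearMap.range fi) v (by
    rintro ⟨s, hs⟩
    apply hvni
    intro a b hab
    have ha := LinearMap.congr_fun hs a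
    have hb := LinearMap.congr_fun hs b
    simp only [LinearMap.coe_comp, Function.comp_apply, LinearMap.id_apply] at ha hb
    rw [← ha, ← hb, hab])
  set θ : M →ₗ[A] M :=
    LinearMap.id - ι ∘ₗ π + ι ∘ₗ ((LinearMap.range fi).subtype ∘ₗ w) with hθdef
  have hθf : ∀ l, θ (f l) = f l := by
    intro l
    have h1 : w (f l) = v l := LinearMap.congr_fun hw l
    have h2 : ((LinearMap.range fi).subtype (v l)) = fi l := rfl
    simp only [hθdef, LinearMap.add_apply, LinearMap.sub_apply, LinearMap.id_apply,
      LinearMap.coe_comp, Function.comp_apply, h1, h2]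
    have h3 : π (f l) = fi l := rfl
    rw [h3]
    abel
  have hθs := asLeftSurj f g hfinj hg hker hns ras' θ hθf
  intro k
  obtain ⟨x, hx⟩ := hθs (ι k)
  have h4 : π (θ x) = k := by rw [hx, hπι]
  have h5 : π (θ x) = ((w x : K)) := by
    simp only [hθdef, LinearMap.add_apply, LinearMap.sub_apply, LinearMap.id_apply,
      LinearMap.coe_comp, Function.comp_apply, map_add, map_sub, hπι, Submodule.coe_subtype]
    abel
  obtain ⟨l, hl⟩ := (w x).2
  exact ⟨l, by rw [hl, ← h5, h4]⟩

/-- Component of the right map of an almost split sequence: not surjective implies injective. -/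
theorem asGDich (f : L →ₗ[A] M) (g : M →ₗ[A] N)
    (hfinj : Function.Injective f) (hg : Function.Surjective g)
    (hker : LinearMap.ker g = LinearMap.range f)
    (hns : ¬ ∃ s : N →ₗ[A] M, g ∘ₗ s = LinearMap.id)
    (las' : ∀ h : L →ₗ[A] L, (¬ ∃ s : L →ₗ[A] L, s ∘ₗ h = LinearMap.id) →
      ∃ t : M →ₗ[A] L, t ∘ₗ f = h)
    (ras'' : ∀ (X : Type) [AddCommGroup X] [Module A X] (h : X →ₗ[A] N),
      (¬ ∃ s : N →ₗ[A] X, h ∘ₗ s = LinearMap.id) → ∃ t : X →ₗ[A] M, g ∘ₗ t = h)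
    (ι : K →ₗ[A] M) (π : M →ₗ[A] K) (hπι : ∀ k, π (ι k) = k)
    (hnsj : ¬ Function.Surjective (g ∘ₗ ι)) : Function.Injective (g ∘ₗ ι) := by
  set gi : K →ₗ[A] N := g ∘ₗ ι with hgidef
  set v := (LinearMap.ker gi).mkQ with hvdef
  set u : (K ⧸ LinearMap.ker gi) →ₗ[A] N := (LinearMap.ker gi).liftQ gi le_rfl with hudef
  have huv : ∀ k, u (v k) = gi k := fun k => rfl
  have husurj : Function.Surjective u → Function.Surjective gi := by
    intro hu y
    obtain ⟨z, hz⟩ := hu y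
    obtain ⟨k, rfl⟩ := (LinearMap.ker gi).mkQ_surjective z
    exact ⟨k, by rw [← huv k]; exact hz⟩
  obtain ⟨t, ht⟩ := ras'' (K ⧸ LinearMap.ker gi) u (by
    rintro ⟨s, hs⟩
    apply hnsj
    apply husurj
    intro y
    exact ⟨s y, LinearMap.congr_fun hs y⟩)
  set φ : M →ₗ[A] M := LinearMap.id - ι ∘ₗ π + t ∘ₗ (v ∘ₗ π) with hφdef
  have hφg : ∀ x, g (φ x) = g x := by
    intro x
    have h1 : g (t (v (π x))) = u (v (π x)) := LinearMap.congr_fun ht (v (π x))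
    have h2 : g (ι (π x)) = gi (π x) := rfl
    simp only [hφdef, LinearMap.add_apply, LinearMap.sub_apply, LinearMap.id_apply,
      LinearMap.coe_comp, Function.comp_apply, map_add, map_sub, h1, h2, huv]
    abel
  have hφi := asRightInj f g hfinj hg hker hns las' φ hφg
  have hz : ∀ k, gi k = 0 → k = 0 := by
    intro k hk
    have hvk : v k = 0 := by
      rw [hvdef, Submodule.mkQ_apply, Submodule.Quotient.mk_eq_zero]
      exact LinearMap.mem_ker.mpr hk
    have h6 : φ (ι k) = 0 := by
      simp only [hφdef, LinearMap.add_apply, LinearMap.sub_apply, LinearMap.id_apply,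
        LinearMap.coe_comp, Function.comp_apply, hπι, hvk, map_zero]
      abel
    have h7 : ι k = 0 := by
      apply hφi
      rw [h6, map_zero]
    rw [← hπι k, h7, map_zero]
  intro a b hab
  have : gi (a - b) = 0 := by rw [map_sub, sub_eq_zero]; exact hab
  have := hz _ this
  rwa [sub_eq_zero] at this

end Aux

/-- If `C` is a nonzero subcategory of `mod A` closed under extensions and direct summands,
and `0 → L → ⊕ᵢ Mᵢ → N → 0` is an almost split sequence with all `Mᵢ` nonzero, `L ∈ C̄`
and `N ∈ C̲`, then `n = 1` (the middle term is indecomposable), and the middle term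
belongs to neither `C̲` nor `C̄`. -/
theorem stmt_14 [IsArtinianRing A] (C : Set (ModuleCat.{0} A))
    (hC : ∃ N ∈ C, Nontrivial N)
    (hfg : ∀ N ∈ C, Module.Finite A N)
    (hiso : ∀ M N : ModuleCat A, (M ≃ₗ[A] N) → M ∈ C → N ∈ C)
    (hext : ∀ (M : ModuleCat A) (L : Submodule A M),
      ModuleCat.of A L ∈ C → ModuleCat.of A (M ⧸ L) ∈ C → M ∈ C)
    (hsummand : ∀ M N : ModuleCat A, ModuleCat.of A (M × N) ∈ C → M ∈ C ∧ N ∈ C)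
    (n : ℕ) (Mi : Fin n → ModuleCat A) (hMi : ∀ i, Nontrivial (Mi i))
    (hMifg : ∀ i, Module.Finite A (Mi i))
    (L N : ModuleCat A)
    (f : L →ₗ[A] (ModuleCat.of A (∀ i, Mi i)))
    (g : (ModuleCat.of A (∀ i, Mi i)) →ₗ[A] N)
    (hseq : IsAlmostSplitSeq f g)
    (hL : L ∈ quotMin C) (hN : N ∈ subMin C) :
    n = 1 ∧ ModuleCat.of A (∀ i, Mi i) ∉ subMin C ∪ quotMin C := by
  classical
  obtain ⟨hfinj, hgsurj, hker, hns, ras, las⟩ := hseq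
  obtain ⟨hLC, hLnt, hLquot⟩ := hL
  obtain ⟨hNC, hNnt, hNsub⟩ := hN
  have gf0 : ∀ l, g (f l) = 0 := fun l => by
    have : f l ∈ LinearMap.ker g := by rw [hker]; exact ⟨l, rfl⟩
    exact this
  have hmemker : ∀ x, g x = 0 → ∃ l, f l = x := by
    intro x hx
    have : x ∈ LinearMap.range f := hker ▸ LinearMap.mem_ker.mpr hx
    exact this
  have hkerbot : LinearMap.ker g ≠ ⊥ := by
    intro h
    apply hns
    have hbij : Function.Bijective g := ⟨LinearMap.ker_eq_bot.mp h, hgsurj⟩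
    exact ⟨(LinearEquiv.ofBijective g hbij).symm.toLinearMap,
      LinearMap.ext fun y => (LinearEquiv.ofBijective g hbij).apply_symm_apply y⟩
  have hkertop : LinearMap.ker g ≠ ⊤ := by
    intro h
    obtain ⟨a, b, hab⟩ := hNnt
    apply hab
    obtain ⟨x, rfl⟩ := hgsurj a
    obtain ⟨y, rfl⟩ := hgsurj b
    have hx : g x = 0 := by
      have : x ∈ LinearMap.ker g := h ▸ Submodule.mem_top
      exact this
    have hy : g y = 0 := by
      have : y ∈ LinearMap.ker g := h ▸ Submodule.mem_top
      exact this
    rw [hx, hy]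
  have hrangebot : LinearMap.range f ≠ ⊥ := by
    intro h
    obtain ⟨a, b, hab⟩ := hLnt
    apply hab
    apply hfinj
    have ha : f a ∈ (⊥ : Submodule A _) := h ▸ LinearMap.mem_range_self f a
    have hb : f b ∈ (⊥ : Submodule A _) := h ▸ LinearMap.mem_range_self f b
    rw [Submodule.mem_bot] at ha hb
    rw [ha, hb]
  have hrangetop : LinearMap.range f ≠ ⊤ := fun h => hkertop (hker.trans h)
  have hpart2 : ModuleCat.of A (∀ i, Mi i) ∉ subMin C ∪ quotMin C := by
    intro hmem
    rcases hmem with h | h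
    · obtain ⟨hMC', hMnt, hsub⟩ := h
      exact hsub (LinearMap.range f) hrangebot hrangetop
        (hiso L (ModuleCat.of A (LinearMap.range f)) (LinearEquiv.ofInjective f hfinj) hLC)
    · obtain ⟨hMC', hMnt, hquot⟩ := h
      exact hquot (LinearMap.ker g) hkerbot hkertop
        (hiso N (ModuleCat.of A (_ ⧸ LinearMap.ker g))
          (g.quotKerEquivOfSurjective hgsurj).symm hNC)
  have hn0 : n ≠ 0 := by
    intro h
    subst h
    obtain ⟨a, b, hab⟩ := hLnt
    apply hab
    apply hfinj
    funext i
    exact i.elim0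
  have hn2 : n < 2 := by
    by_contra hge
    push_neg at hge
    have hMC : ModuleCat.of A (∀ i, Mi i) ∈ C := by
      apply hext (ModuleCat.of A (∀ i, Mi i)) (LinearMap.range f)
      · exact hiso L _ (LinearEquiv.ofInjective f hfinj) hLC
      · refine hiso N _ ?_ hNC
        exact ((Submodule.quotEquivOfEq (LinearMap.range f) (LinearMap.ker g) hker.symm).trans
          (g.quotKerEquivOfSurjective hgsurj)).symm
    have hMiC : ∀ i, Mi i ∈ C := by
      intro i
      have e : (∀ j, ↥(Mi j)) ≃ₗ[A] (↥(Mi i) × ∀ j : {j // j ≠ i}, ↥(Mi j)) :=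
        { Equiv.piSplitAt i (fun j => ↥(Mi j)) with
          map_add' := fun x y => rfl
          map_smul' := fun r x => rfl }
      exact (hsummand (Mi i) (ModuleCat.of A (∀ j : {j // j ≠ i}, ↥(Mi j)))
        (hiso (ModuleCat.of A (∀ i, Mi i))
          (ModuleCat.of A (↥(Mi i) × ∀ j : {j // j ≠ i}, ↥(Mi j))) e hMC)).1
    have ras' : ∀ h : ↥N →ₗ[A] ↥N, (¬ ∃ s : ↥N →ₗ[A] ↥N, h ∘ₗ s = LinearMap.id) →
        ∃ t : ↥N →ₗ[A] ↥(ModuleCat.of A (∀ i, Mi i)), g ∘ₗ t = h := fun h hh => ras N h hh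
    have las' : ∀ h : ↥L →ₗ[A] ↥L, (¬ ∃ s : ↥L →ₗ[A] ↥L, s ∘ₗ h = LinearMap.id) →
        ∃ t : ↥(ModuleCat.of A (∀ i, Mi i)) →ₗ[A] ↥L, t ∘ₗ f = h := fun h hh => las L h hh
    have las'' : ∀ (X : Type) [AddCommGroup X] [Module A X] (h : ↥L →ₗ[A] X),
        (¬ ∃ s : X →ₗ[A] ↥L, s ∘ₗ h = LinearMap.id) →
        ∃ w : ↥(ModuleCat.of A (∀ i, Mi i)) →ₗ[A] X, w ∘ₗ f = h := by
      intro X _ _ h hh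
      exact las (ModuleCat.of A X) h hh
    have ras'' : ∀ (X : Type) [AddCommGroup X] [Module A X] (h : X →ₗ[A] ↥N),
        (¬ ∃ s : ↥N →ₗ[A] X, h ∘ₗ s = LinearMap.id) →
        ∃ t : X →ₗ[A] ↥(ModuleCat.of A (∀ i, Mi i)), g ∘ₗ t = h := by
      intro X _ _ h hh
      exact ras (ModuleCat.of A X) h hh
    have hfi : ∀ i, Function.Injective
        ((LinearMap.proj i : (∀ j, ↥(Mi j)) →ₗ[A] ↥(Mi i)) ∘ₗ f) := by
      intro i
      by_contra hni
      have hsurj := asFDich f g hfinj hgsurj hker hns ras' las''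
        (LinearMap.single A (fun j => ↥(Mi j)) i) (LinearMap.proj i)
        (fun k => show (Pi.single i k : ∀ j, ↥(Mi j)) i = k from Pi.single_eq_same (M := fun j => ↥(Mi j)) i k) hni
      set fi : ↥L →ₗ[A] ↥(Mi i) :=
        (LinearMap.proj i : (∀ j, ↥(Mi j)) →ₗ[A] ↥(Mi i)) ∘ₗ f with hfidef
      have hkb : LinearMap.ker fi ≠ ⊥ := fun h => hni (LinearMap.ker_eq_bot.mp h)
      have hkt : LinearMap.ker fi ≠ ⊤ := by
        intro h
        obtain ⟨a, b, hab⟩ := hMi i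
        apply hab
        obtain ⟨x, rfl⟩ := hsurj a
        obtain ⟨y, rfl⟩ := hsurj b
        have hx : fi x = 0 := by
          have : x ∈ LinearMap.ker fi := h ▸ Submodule.mem_top
          exact this
        have hy : fi y = 0 := by
          have : y ∈ LinearMap.ker fi := h ▸ Submodule.mem_top
          exact this
        rw [hx, hy]
      exact hLquot (LinearMap.ker fi) hkb hkt
        (hiso (Mi i) (ModuleCat.of A (↥L ⧸ LinearMap.ker fi))
          (fi.quotKerEquivOfSurjective hsurj).symm (hMiC i))
    have hgi : ∀ i, Function.Surjective (g ∘ₗ LinearMap.single A (fun j => ↥(Mi j)) i) := by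
      intro i
      by_contra hnsj
      have hinj := asGDich f g hfinj hgsurj hker hns las' ras''
        (LinearMap.single A (fun j => ↥(Mi j)) i) (LinearMap.proj i)
        (fun k => show (Pi.single i k : ∀ j, ↥(Mi j)) i = k from Pi.single_eq_same (M := fun j => ↥(Mi j)) i k) hnsj
      set gi : ↥(Mi i) →ₗ[A] ↥N := g ∘ₗ LinearMap.single A (fun j => ↥(Mi j)) i with hgidef
      have hrb : LinearMap.range gi ≠ ⊥ := by
        intro h
        obtain ⟨a, b, hab⟩ := hMi i
        apply hab
        apply hinj
        have ha : gi a ∈ (⊥ : Submodule A ↥N) := h ▸ LinearMap.mem_range_self gi a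
        have hb : gi b ∈ (⊥ : Submodule A ↥N) := h ▸ LinearMap.mem_range_self gi b
        rw [Submodule.mem_bot] at ha hb
        show gi a = gi b
        rw [ha, hb]
      have hrt : LinearMap.range gi ≠ ⊤ := fun h => hnsj (LinearMap.range_eq_top.mp h)
      exact hNsub (LinearMap.range gi) hrb hrt
        (hiso (Mi i) (ModuleCat.of A (LinearMap.range gi))
          (LinearEquiv.ofInjective gi hinj) (hMiC i))
    set i0 : Fin n := ⟨0, by omega⟩ with hi0
    set i1 : Fin n := ⟨1, by omega⟩ with hi1
    have hne : i1 ≠ i0 := by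
      intro h
      have := congrArg Fin.val h
      simp [hi0, hi1] at this
    set g0 : ↥(Mi i0) →ₗ[A] ↥N := g ∘ₗ LinearMap.single A (fun j => ↥(Mi j)) i0 with hg0def
    have hg0z : ∀ k, g0 k = 0 → k = 0 := by
      intro k hk
      obtain ⟨l, hl⟩ := hmemker (LinearMap.single A (fun j => ↥(Mi j)) i0 k) hk
      have h1 : ((LinearMap.proj i1 : (∀ j, ↥(Mi j)) →ₗ[A] ↥(Mi i1)) ∘ₗ f) l = 0 := by
        show f l i1 = 0
        have : f l i1 = (LinearMap.single A (fun j => ↥(Mi j)) i0 k) i1 := by rw [hl]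
        rw [this]
        exact Pi.single_eq_of_ne (M := fun j => ↥(Mi j)) hne k
      have h2 : l = 0 := by
        apply hfi i1
        rw [h1, map_zero]
      rw [h2, map_zero] at hl
      have h3 : (LinearMap.single A (fun j => ↥(Mi j)) i0) k = 0 := hl.symm
      have h5 : ((LinearMap.single A (fun j => ↥(Mi j)) i0) k) i0 = k :=
        Pi.single_eq_same (M := fun j => ↥(Mi j)) i0 k
      rw [← h5, h3]
      rfl
    have hg0inj : Function.Injective g0 := by
      intro a b hab
      have : g0 (a - b) = 0 := by rw [map_sub, sub_eq_zero]; exact hab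
      have := hg0z _ this
      rwa [sub_eq_zero] at this
    have hg0bij : Function.Bijective g0 := ⟨hg0inj, hgi i0⟩
    apply hns
    refine ⟨(LinearMap.single A (fun j => ↥(Mi j)) i0) ∘ₗ
      (LinearEquiv.ofBijective g0 hg0bij).symm.toLinearMap, ?_⟩
    apply LinearMap.ext
    intro y
    show g ((LinearMap.single A (fun j => ↥(Mi j)) i0)
      ((LinearEquiv.ofBijective g0 hg0bij).symm y)) = y
    have h4 : g ((LinearMap.single A (fun j => ↥(Mi j)) i0)
        ((LinearEquiv.ofBijective g0 hg0bij).symm y)) =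
        g0 ((LinearEquiv.ofBijective g0 hg0bij).symm y) := rfl
    rw [h4]
    exact (LinearEquiv.ofBijective g0 hg0bij).apply_symm_apply y
  exact ⟨by omega, hpart2⟩
end

section
/- Let θ be a class of nonzero modules in mod A, closed under isomorphism, such that F(θ) is closed under kernels of epimorphisms and every epimorphism between modules of θ is an isomorphism. Then the class (F(θ))̄ equals θ. -/
open CategoryTheory

variable {A : Type} [Ring A]

/-- For the top submodule, the internal quotient is isomorphic to the honest quotient. -/
noncomputable def quotEquivTop {M : Type*} [AddCommGroup M] [Module A M]
    (N : Submodule A M) (h : N = ⊤) (p : Submodule A M) :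
    (↥N ⧸ p.comap N.subtype) ≃ₗ[A] (M ⧸ p) :=
  Submodule.Quotient.equiv _ p (LinearEquiv.ofTop N h) (by
    ext x
    simp only [Submodule.mem_map, Submodule.mem_comap]
    constructor
    · rintro ⟨y, hy, rfl⟩
      exact hy
    · intro hx
      exact ⟨⟨x, h ▸ Submodule.mem_top⟩, hx, rfl⟩)

/-- Transport membership along a trivial internal quotient. -/
lemma mem_of_eq (θ : Set (ModuleCat A))
    (hiso : ∀ M N : ModuleCat A, (M ≃ₗ[A] N) → M ∈ θ → N ∈ θ)
    {M : ModuleCat A} {N p : Submodule A M} (hN : N = ⊤) (hp : p = ⊥) (hM : M ∈ θ) :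
    ModuleCat.of A (↥N ⧸ p.comap N.subtype) ∈ θ := by
  subst hN hp
  refine hiso M _ ?_ hM
  exact ((quotEquivTop (A := A) (⊤ : Submodule A M) rfl ⊥).trans
    (Submodule.quotEquivOfEqBot _ rfl)).symm

/-- Every member of `θ` is `θ`-filtered. -/
lemma mem_filtered (θ : Set (ModuleCat A))
    (hiso : ∀ M N : ModuleCat A, (M ≃ₗ[A] N) → M ∈ θ → N ∈ θ)
    (M : ModuleCat A) (hM : M ∈ θ) (hnt : Nontrivial M) :
    Filtered θ M := by
  refine ⟨1, ![⊥, ⊤], by simp, by simp [Fin.last], ?_, ?_⟩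
  · intro a b hab
    fin_cases a <;> fin_cases b <;>
      first
        | exact absurd hab (by decide)
        | simp only; exact bot_lt_top
  · intro i
    have hi : i = 0 := Subsingleton.elim _ _
    subst hi
    exact mem_of_eq θ hiso (show (![⊥,⊤] : Fin 2 → Submodule A M) (Fin.succ 0) = ⊤ from rfl)
      (show (![⊥,⊤] : Fin 2 → Submodule A M) (Fin.castSucc 0) = ⊥ from rfl) hM

/-- Every nontrivial `θ`-filtered module has a proper quotient lying in `θ`. -/
lemma filtered_quot (θ : Set (ModuleCat A))
    (hiso : ∀ M N : ModuleCat A, (M ≃ₗ[A] N) → M ∈ θ → N ∈ θ)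
    (M : ModuleCat A) (h : Filtered θ M) (hnt : Nontrivial M) :
    ∃ L : Submodule A M, L ≠ ⊤ ∧ ModuleCat.of A (M ⧸ L) ∈ θ := by
  obtain ⟨n, s, h0, htop, hmono, hq⟩ := h
  cases n with
  | zero =>
    exfalso
    have : (⊥ : Submodule A M) = ⊤ := by rw [← h0, ← htop]; rfl
    exact absurd this bot_ne_top
  | succ m =>
    set i : Fin (m+1) := Fin.last m with hi
    have hsucc : i.succ = Fin.last (m+1) := Fin.succ_last m
    have hstop : s i.succ = ⊤ := by rw [hsucc]; exact htop
    refine ⟨s i.castSucc, ?_, ?_⟩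
    · intro hcontra
      have : s i.castSucc < s i.succ := hmono (Fin.castSucc_lt_succ (i := i))
      rw [hcontra, hstop] at this
      exact lt_irrefl _ this
    · exact hiso _ _ (quotEquivTop (s i.succ) hstop (s i.castSucc)) (hq i)

/-- Let `θ` be a class of nonzero modules in `mod A` (`A` artinian), closed under
isomorphism, such that the class `F(θ)` of `θ`-filtered modules is closed under kernels of
epimorphisms and every epimorphism between modules of `θ` is an isomorphism.  Then
`(F(θ))̄ = θ`. -/
theorem stmt_19 [IsArtinianRing A] (θ : Set (ModuleCat A))
    (hnz : ∀ M ∈ θ, Nontrivial M)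
    (hfg : ∀ M ∈ θ, Module.Finite A M)
    (hiso : ∀ M N : ModuleCat A, (M ≃ₗ[A] N) → M ∈ θ → N ∈ θ)
    (hker : ∀ (M N : ModuleCat A), Filtered θ M → Filtered θ N → ∀ f : M →ₗ[A] N,
      Function.Surjective f → Filtered θ (ModuleCat.of A (LinearMap.ker f)))
    (hepi : ∀ M ∈ θ, ∀ N ∈ θ, ∀ f : M →ₗ[A] N,
      Function.Surjective f → Function.Injective f) :
    quotMin {M : ModuleCat A | Filtered θ M} = θ := by
  ext M
  constructor
  · rintro ⟨hf, hnt, hq⟩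
    obtain ⟨L, hLtop, hLθ⟩ := filtered_quot θ hiso M hf hnt
    by_cases hLbot : L = ⊥
    · exact hiso _ M (Submodule.quotEquivOfEqBot L hLbot) hLθ
    · exfalso
      refine hq L hLbot hLtop ?_
      have hnt' : Nontrivial (M ⧸ L) := (Submodule.Quotient.nontrivial_iff (p := L)).mpr hLtop.lt_top.ne
      exact mem_filtered θ hiso _ hLθ hnt'
  · intro hθ
    refine ⟨mem_filtered θ hiso M hθ (hnz M hθ), hnz M hθ, ?_⟩
    intro L hLbot hLtop hFil
    have hnt' : Nontrivial (M ⧸ L) := (Submodule.Quotient.nontrivial_iff (p := L)).mpr hLtop.lt_top.ne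
    obtain ⟨L', hL'top, hL'θ⟩ :=
      filtered_quot θ hiso (ModuleCat.of A (M ⧸ L)) hFil hnt'
    set f : M →ₗ[A] ((M ⧸ L) ⧸ L') := L'.mkQ.comp L.mkQ with hf
    have hsurj : Function.Surjective f :=
      (L'.mkQ_surjective).comp (L.mkQ_surjective)
    have hinj : Function.Injective f := hepi M hθ _ hL'θ f hsurj
    obtain ⟨x, hxL, hxne⟩ := Submodule.exists_mem_ne_zero_of_ne_bot hLbot
    have h1 : L.mkQ x = 0 := (Submodule.Quotient.mk_eq_zero L).mpr hxL
    have h2 : f x = 0 := by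
      show L'.mkQ (L.mkQ x) = 0
      rw [h1]; exact map_zero _
    exact hxne (hinj (by simpa using h2))
end
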